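/- arXiv:math/0010070 — 2 statements merged into one kernel-verified Lean document; each statement's English description precedes it below -/
import Mathlib

section
/- Assume: (i) t = (n_t, g_t, P_t) is a k-creature with n_t ≥ 2 and γ ∈ [0,1]; (ii) r_f ∈ [0,1] for f ∈ P_t, a = F*_t(r_f : f ∈ P_t), and γ·a ≥ 2^(−6·2^k); (iii) Y is a finite nonempty set; (iv) for each f ∈ P_t, u_f is a function from Y to [0,1] with γ·r_f·|Y| ≤ Σ{ u_f(y) : y ∈ Y }; (v) for y ∈ Y set u(y) = sup{ b : there is a k-creature s ∈ Σ*(t) with n_s ≥ n_t − 1 and b ≤ F*_s(u_f(y) : f ∈ P_s) }. Then γ·a·(1 − 2^(−2^k)) ≤ (Σ{ u(y) : y ∈ Y })/|Y|. -/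
namespace MeasuredCreatures

/-- The condition on the parameter function `φ = φ_k`:
`φ(0) = 2^(k+4)` and `φ(i+1) > 2^(2^(k+3)) + φ(i) + 2^(2k+7)/log₂(1 + 2^(−2^(2k+7)))`. -/
def PhiCond (k : ℕ) (φ : ℕ → ℕ) : Prop :=
  φ 0 = 2 ^ (k + 4) ∧
  ∀ i : ℕ, (φ (i + 1) : ℝ) >
    (2 : ℝ) ^ (2 ^ (k + 3)) + (φ i : ℝ) +
      (2 : ℝ) ^ (2 * k + 7) / Real.logb 2 (1 + ((2 : ℝ) ^ (2 ^ (2 * k + 7)))⁻¹)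

/-- `N = N_k = 2^(1+⌊log₂ φ(k+1)⌋)`. -/
def Nval (k : ℕ) (φ : ℕ → ℕ) : ℕ := 2 ^ (1 + Nat.log 2 (φ (k + 1)))

/-- The domain of a partial function `g` from `{0,…,N−1}` to `{0,1}`. -/
def pdom {N : ℕ} (g : Fin N → Option Bool) : Finset (Fin N) :=
  Finset.univ.filter fun i => (g i).isSome

/-- `g ⊆ g'` for partial functions. -/
def PSub {N : ℕ} (g g' : Fin N → Option Bool) : Prop :=
  ∀ (i : Fin N) (b : Bool), g i = some b → g' i = some b

/-- `g ⊆ f` for a partial function `g` and a total function `f`. -/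
def PSubF {N : ℕ} (g : Fin N → Option Bool) (f : Fin N → Bool) : Prop :=
  ∀ (i : Fin N) (b : Bool), g i = some b → f i = b

/-- A `k`-creature: a triple `(n, g, P)` with `n ≤ k` (the norm), `g` a partial function
from `{0,…,N−1}` to `{0,1}` with `|dom g| ≤ φ(k−n)`, and `P` a nonempty set of total
functions extending `g`. -/
structure Creature (k N : ℕ) (φ : ℕ → ℕ) where
  n : ℕ
  g : Fin N → Option Bool
  P : Finset (Fin N → Bool)
  n_le : n ≤ k
  g_card : (pdom g).card ≤ φ (k - n)
  P_ne : P.Nonempty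
  P_ext : ∀ f ∈ P, PSubF g f

/-- `s ∈ Σ*(t)`. -/
def SigmaRel {k N : ℕ} {φ : ℕ → ℕ} (s t : Creature k N φ) : Prop :=
  s.n ≤ t.n ∧ PSub t.g s.g ∧ s.P ⊆ t.P

open Classical in
/-- The averaging function
`F*_t(r) = min { 2^(|dom h|−N) · Σ{ r_f : f ∈ P_t, h ⊆ f } : g_t ⊆ h, |dom h ∖ dom g_t| ≤ 2^(k+3) }`. -/
noncomputable def Fstar {k N : ℕ} {φ : ℕ → ℕ} (t : Creature k N φ)
    (r : (Fin N → Bool) → ℝ) : ℝ :=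
  sInf {v : ℝ | ∃ h : Fin N → Option Bool,
    PSub t.g h ∧ (pdom h \ pdom t.g).card ≤ 2 ^ (k + 3) ∧
    v = (2 : ℝ) ^ (((pdom h).card : ℤ) - (N : ℤ)) *
      ∑ f ∈ t.P, (if PSubF h f then r f else 0)}


section Aux
open Classical
variable {N : ℕ}

/-- number of total functions agreeing with `c` on `E`. -/
lemma card_agree (E : Finset (Fin N)) (c : Fin N → Bool) :
    (Finset.univ.filter fun σ : Fin N → Bool => ∀ i ∈ E, σ i = c i).card
      = 2 ^ (N - E.card) := by
  have : (Finset.univ.filter fun σ : Fin N → Bool => ∀ i ∈ E, σ i = c i).card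
      = Fintype.card {σ : Fin N → Bool // ∀ i ∈ E, σ i = c i} := by
    rw [Fintype.card_subtype]
  rw [this]
  have e : {σ : Fin N → Bool // ∀ i ∈ E, σ i = c i} ≃ ({i : Fin N // i ∈ Eᶜ} → Bool) :=
    { toFun := fun σ i => σ.1 i.1
      invFun := fun τ => ⟨fun i => if h : i ∈ E then c i else τ ⟨i, by simpa using h⟩,
        fun i hi => by simp [hi]⟩
      left_inv := by
        rintro ⟨σ, hσ⟩
        ext i
        by_cases h : i ∈ E <;> simp [h]
        exact (hσ i h).symm
      right_inv := by
        intro τ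
        ext i
        have hi : (i : Fin N) ∉ E := by
          exact Finset.mem_compl.mp i.2
        simp [hi] }
  rw [Fintype.card_congr e, Fintype.card_fun]
  simp [Finset.card_compl]

open Classical in
noncomputable def avg (P : Finset (Fin N → Bool)) (w : (Fin N → Bool) → ℝ)
    (h : Fin N → Option Bool) : ℝ :=
  (2 : ℝ) ^ (((pdom h).card : ℤ) - (N : ℤ)) * ∑ f ∈ P, (if PSubF h f then w f else 0)

def ext (h : Fin N → Option Bool) (E : Finset (Fin N)) (σ : Fin N → Bool) :
    Fin N → Option Bool :=
  fun i => if i ∈ E then some (σ i) else h i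

lemma mem_pdom {g : Fin N → Option Bool} {i : Fin N} : i ∈ pdom g ↔ (g i).isSome := by
  simp [pdom]

lemma pdom_ext (h : Fin N → Option Bool) (E : Finset (Fin N)) (σ : Fin N → Bool) :
    pdom (ext h E σ) = pdom h ∪ E := by
  ext i
  by_cases hi : i ∈ E <;> simp [mem_pdom, ext, hi]

lemma psub_ext {h : Fin N → Option Bool} {E : Finset (Fin N)} (σ : Fin N → Bool)
    (hd : Disjoint E (pdom h)) : PSub h (ext h E σ) := by
  intro i b hb
  have : i ∉ E := fun hi => (Finset.disjoint_left.mp hd hi) (mem_pdom.mpr (by simp [hb]))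
  simp [ext, this, hb]

lemma psubF_ext_iff {h : Fin N → Option Bool} {E : Finset (Fin N)} {σ : Fin N → Bool}
    {f : Fin N → Bool} (hd : Disjoint E (pdom h)) :
    PSubF (ext h E σ) f ↔ PSubF h f ∧ ∀ i ∈ E, f i = σ i := by
  constructor
  · intro H
    constructor
    · intro i b hb
      have hi : i ∉ E := fun hi => (Finset.disjoint_left.mp hd hi) (mem_pdom.mpr (by simp [hb]))
      exact H i b (by simp [ext, hi, hb])
    · intro i hi
      exact H i (σ i) (by simp [ext, hi])
  · rintro ⟨H1, H2⟩ i b hb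
    by_cases hi : i ∈ E
    · simp only [ext, if_pos hi] at hb
      rw [H2 i hi]; exact (Option.some_injective _ hb).symm ▸ rfl
    · exact H1 i b (by simpa [ext, hi] using hb)

lemma avg_nonneg {P : Finset (Fin N → Bool)} {w : (Fin N → Bool) → ℝ}
    (hw : ∀ f ∈ P, 0 ≤ w f) (h : Fin N → Option Bool) : 0 ≤ avg P w h := by
  apply mul_nonneg (by positivity)
  apply Finset.sum_nonneg
  intro f hf
  by_cases hP : PSubF h f <;> simp [hP, hw f hf]

lemma psubF_iff_agree {h : Fin N → Option Bool} {f : Fin N → Bool} :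
    PSubF h f ↔ ∀ i ∈ pdom h, f i = (h i).getD false := by
  constructor
  · intro H i hi
    obtain ⟨b, hb⟩ := Option.isSome_iff_exists.mp (mem_pdom.mp hi)
    rw [H i b hb, hb]; rfl
  · intro H i b hb
    have := H i (mem_pdom.mpr (by simp [hb]))
    rwa [hb] at this

lemma sum_indicator_le {P : Finset (Fin N → Bool)} {w : (Fin N → Bool) → ℝ}
    (hw : ∀ f ∈ P, w f ≤ 1) (hw0 : ∀ f ∈ P, 0 ≤ w f) (h : Fin N → Option Bool) :
    ∑ f ∈ P, (if PSubF h f then w f else 0) ≤ (2:ℝ) ^ (N - (pdom h).card) := by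
  have step1 : ∑ f ∈ P, (if PSubF h f then w f else 0)
      ≤ ∑ f ∈ P, (if PSubF h f then (1:ℝ) else 0) := by
    apply Finset.sum_le_sum
    intro f hf
    by_cases hP : PSubF h f <;> simp [hP, hw f hf]
  have step2 : ∑ f ∈ P, (if PSubF h f then (1:ℝ) else 0)
      ≤ ∑ f ∈ (Finset.univ : Finset (Fin N → Bool)), (if PSubF h f then (1:ℝ) else 0) := by
    apply Finset.sum_le_sum_of_subset_of_nonneg (Finset.subset_univ P)
    intro f _ _; positivity
  have step3 : ∑ f ∈ (Finset.univ : Finset (Fin N → Bool)), (if PSubF h f then (1:ℝ) else 0)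
      = ((Finset.univ.filter fun f : Fin N → Bool => PSubF h f).card : ℝ) := by
    rw [Finset.sum_boole]
  have step4 : (Finset.univ.filter fun f : Fin N → Bool => PSubF h f).card
      = 2 ^ (N - (pdom h).card) := by
    have : (Finset.univ.filter fun f : Fin N → Bool => PSubF h f)
        = (Finset.univ.filter fun f : Fin N → Bool => ∀ i ∈ pdom h, f i = (h i).getD false) := by
      apply Finset.filter_congr
      intro f _
      simp only [psubF_iff_agree]
    rw [this, card_agree]
  calc ∑ f ∈ P, (if PSubF h f then w f else 0) ≤ _ := step1
    _ ≤ _ := step2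
    _ = _ := step3
    _ = ((2:ℕ) ^ (N - (pdom h).card) : ℝ) := by rw [step4]; push_cast; ring
    _ = (2:ℝ) ^ (N - (pdom h).card) := by push_cast; ring

lemma avg_le_one {P : Finset (Fin N → Bool)} {w : (Fin N → Bool) → ℝ}
    (hw : ∀ f ∈ P, w f ≤ 1) (hw0 : ∀ f ∈ P, 0 ≤ w f) (h : Fin N → Option Bool) :
    avg P w h ≤ 1 := by
  have hcard : (pdom h).card ≤ N := by
    simpa using Finset.card_le_univ (pdom h)
  have key : ((2:ℝ) ^ (((pdom h).card : ℤ) - (N : ℤ))) * (2:ℝ) ^ (N - (pdom h).card) = 1 := by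
    rw [show ((2:ℝ) ^ (N - (pdom h).card) : ℝ) = (2:ℝ) ^ ((N - (pdom h).card : ℕ) : ℤ) by
      rw [zpow_natCast]]
    rw [← zpow_add₀ (by norm_num : (2:ℝ) ≠ 0)]
    rw [show (((pdom h).card : ℤ) - (N : ℤ)) + ((N - (pdom h).card : ℕ) : ℤ) = 0 by
      push_cast [Nat.cast_sub hcard]; ring]
    norm_num
  calc avg P w h ≤ (2:ℝ) ^ (((pdom h).card : ℤ) - (N : ℤ)) * (2:ℝ) ^ (N - (pdom h).card) := by
        unfold avg
        exact mul_le_mul_of_nonneg_left (sum_indicator_le hw hw0 h) (by positivity)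
    _ = 1 := key

lemma sum_ext {P : Finset (Fin N → Bool)} (w : (Fin N → Bool) → ℝ)
    {h : Fin N → Option Bool} {E : Finset (Fin N)} (hd : Disjoint E (pdom h)) :
    ∑ σ : Fin N → Bool, avg P w (ext h E σ) = (2:ℝ) ^ N * avg P w h := by
  have hEN : E.card ≤ N := by simpa using Finset.card_le_univ E
  have hcard : ∀ σ : Fin N → Bool, (pdom (ext h E σ)).card = (pdom h).card + E.card := by
    intro σ
    rw [pdom_ext, Finset.card_union_of_disjoint hd.symm]
  have inner : ∀ f : Fin N → Bool,
      (∑ σ : Fin N → Bool, if PSubF (ext h E σ) f then w f else 0)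
        = (if PSubF h f then w f else 0) * 2 ^ (N - E.card) := by
    intro f
    by_cases hP : PSubF h f
    · have : ∀ σ : Fin N → Bool, (if PSubF (ext h E σ) f then w f else 0)
          = (if ∀ i ∈ E, σ i = f i then w f else 0) := by
        intro σ
        by_cases hag : ∀ i ∈ E, σ i = f i
        · have : PSubF (ext h E σ) f := (psubF_ext_iff hd).mpr ⟨hP, fun i hi => (hag i hi).symm⟩
          rw [if_pos this, if_pos hag]
        · have h2 : ¬ PSubF (ext h E σ) f := by
            intro H
            exact hag fun i hi => ((psubF_ext_iff hd).mp H).2 i hi |>.symm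
          rw [if_neg h2, if_neg hag]
      rw [Finset.sum_congr rfl fun σ _ => this σ]
      rw [← Finset.sum_filter, Finset.sum_const, card_agree E f, if_pos hP]
      push_cast
      ring
    · have : ∀ σ : Fin N → Bool, ¬ PSubF (ext h E σ) f := by
        intro σ H
        exact hP ((psubF_ext_iff hd).mp H).1
      simp [this, hP]
  calc ∑ σ : Fin N → Bool, avg P w (ext h E σ)
      = ∑ σ : Fin N → Bool, (2:ℝ) ^ ((((pdom h).card + E.card : ℕ) : ℤ) - (N:ℤ)) *
          ∑ f ∈ P, (if PSubF (ext h E σ) f then w f else 0) := by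
        apply Finset.sum_congr rfl
        intro σ _
        rw [avg, hcard σ]
    _ = (2:ℝ) ^ ((((pdom h).card + E.card : ℕ) : ℤ) - (N:ℤ)) *
          ∑ f ∈ P, ∑ σ : Fin N → Bool, (if PSubF (ext h E σ) f then w f else 0) := by
        rw [← Finset.mul_sum, Finset.sum_comm]
    _ = (2:ℝ) ^ ((((pdom h).card + E.card : ℕ) : ℤ) - (N:ℤ)) * (2:ℝ) ^ (N - E.card) *
          ∑ f ∈ P, (if PSubF h f then w f else 0) := by
        rw [Finset.sum_congr rfl fun f _ => inner f, ← Finset.sum_mul]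
        push_cast
        ring
    _ = (2:ℝ) ^ N * avg P w h := by
        rw [avg]
        rw [show ((2:ℝ) ^ (N - E.card) : ℝ) = (2:ℝ) ^ ((N - E.card : ℕ) : ℤ) by rw [zpow_natCast]]
        rw [show ((2:ℝ) ^ N : ℝ) = (2:ℝ) ^ ((N : ℕ) : ℤ) by rw [zpow_natCast]]
        rw [← mul_assoc, ← zpow_add₀ (by norm_num : (2:ℝ) ≠ 0), ← zpow_add₀ (by norm_num : (2:ℝ) ≠ 0)]
        congr 2
        push_cast [Nat.cast_sub hEN]
        ring

lemma improve {P : Finset (Fin N → Bool)} {w : (Fin N → Bool) → ℝ}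
    {h : Fin N → Option Bool} {E : Finset (Fin N)} (hE0 : E.Nonempty) {M : ℕ}
    (hEM : E.card ≤ M) (hd : Disjoint E (pdom h)) {δ : ℝ} (hδ0 : 0 < δ)
    {c : Fin N → Bool} (hbad : avg P w (ext h E c) ≤ (1 - δ) * avg P w h)
    (hpos : 0 < avg P w h) :
    ∃ σ : Fin N → Bool, (1 + δ / 2 ^ M) * avg P w h ≤ avg P w (ext h E σ) := by
  by_contra hcon
  push_neg at hcon
  set v := avg P w h with hv
  set B := (1 + δ / 2 ^ M) * v with hB
  set Bad := (Finset.univ.filter fun σ : Fin N → Bool => ∀ i ∈ E, σ i = c i) with hBad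
  set Good := (Finset.univ.filter fun σ : Fin N → Bool => ¬ ∀ i ∈ E, σ i = c i) with hGood
  have hBadCard : Bad.card = 2 ^ (N - E.card) := card_agree E c
  have hsplit : Bad.card + Good.card = 2 ^ N := by
    rw [hBad, hGood, Finset.card_filter_add_card_filter_not]
    simp [Finset.card_univ]
  have hEN : E.card ≤ N := by simpa using Finset.card_le_univ E
  have hlt : 2 ^ (N - E.card) < 2 ^ N :=
    Nat.pow_lt_pow_right one_lt_two (by have := hE0.card_pos; omega)
  have hGoodPos : 0 < Good.card := by
    have h1 := hBadCard
    omega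
  have hGoodNe : Good.Nonempty := Finset.card_pos.mp hGoodPos
  -- bad σ give ext h E σ = ext h E c
  have hbadval : ∀ σ ∈ Bad, avg P w (ext h E σ) = avg P w (ext h E c) := by
    intro σ hσ
    rw [hBad, Finset.mem_filter] at hσ
    congr 1
    funext i
    by_cases hi : i ∈ E
    · simp [ext, hi, hσ.2 i hi]
    · simp [ext, hi]
  have hsum : ∑ σ : Fin N → Bool, avg P w (ext h E σ) = (2:ℝ) ^ N * v := sum_ext w hd
  have hsum2 : ∑ σ : Fin N → Bool, avg P w (ext h E σ)
      = ∑ σ ∈ Bad, avg P w (ext h E σ) + ∑ σ ∈ Good, avg P w (ext h E σ) := by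
    rw [hBad, hGood, Finset.sum_filter_add_sum_filter_not]
  have hb1 : ∑ σ ∈ Bad, avg P w (ext h E σ) ≤ (Bad.card : ℝ) * ((1 - δ) * v) := by
    calc ∑ σ ∈ Bad, avg P w (ext h E σ) = ∑ _σ ∈ Bad, avg P w (ext h E c) :=
          Finset.sum_congr rfl hbadval
      _ = (Bad.card : ℝ) * avg P w (ext h E c) := by rw [Finset.sum_const, nsmul_eq_mul]
      _ ≤ (Bad.card : ℝ) * ((1 - δ) * v) := by
          apply mul_le_mul_of_nonneg_left hbad (by positivity)
  have hb2 : ∑ σ ∈ Good, avg P w (ext h E σ) < (Good.card : ℝ) * B := by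
    calc ∑ σ ∈ Good, avg P w (ext h E σ) < ∑ _σ ∈ Good, B :=
          Finset.sum_lt_sum_of_nonempty hGoodNe fun σ _ => hcon σ
      _ = (Good.card : ℝ) * B := by rw [Finset.sum_const, nsmul_eq_mul]
  -- now derive numeric contradiction
  have key : (2:ℝ) ^ N * v < (Bad.card : ℝ) * ((1 - δ) * v) + (Good.card : ℝ) * B := by
    rw [← hsum, hsum2]; linarith
  have hA : ((Bad.card : ℝ)) = 2 ^ (N - E.card) := by rw [hBadCard]; push_cast; ring
  have hG : ((Good.card : ℝ)) = 2 ^ N - 2 ^ (N - E.card) := by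
    have : (Bad.card : ℝ) + (Good.card : ℝ) = 2 ^ N := by
      rw [← Nat.cast_add, hsplit]; push_cast; ring
    linarith [hA]
  have hpowE : (2:ℝ) ^ (N - E.card) * 2 ^ E.card = 2 ^ N := by
    rw [← pow_add]
    congr 1
    omega
  have hE2 : (2:ℝ) ^ E.card ≤ 2 ^ M := by
    apply pow_le_pow_right₀ one_le_two hEM
  have hApos : (0:ℝ) < 2 ^ (N - E.card) := by positivity
  have hMpos : (0:ℝ) < 2 ^ M := by positivity
  rw [hA, hG, hB, ← hpowE] at key
  set A := (2:ℝ) ^ (N - E.card) with hAdef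
  set e := (2:ℝ) ^ E.card with hedef
  have rhs_eq : A * ((1 - δ) * v) + (A * e - A) * ((1 + δ / 2 ^ M) * v)
      = A * e * v + A * v * δ * ((e - 1) / 2 ^ M - 1) := by
    field_simp
    ring
  have hfrac : (e - 1) / 2 ^ M - 1 ≤ 0 := by
    rw [sub_nonpos, div_le_one hMpos]
    linarith [hE2]
  have bnd : A * v * δ * ((e - 1) / 2 ^ M - 1) ≤ 0 := by
    apply mul_nonpos_of_nonneg_of_nonpos _ hfrac
    positivity
  rw [rhs_eq] at key
  linarith

lemma psub_refl (g : Fin N → Option Bool) : PSub g g := fun _ _ hb => hb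

lemma psub_trans {g₁ g₂ g₃ : Fin N → Option Bool} (h12 : PSub g₁ g₂) (h23 : PSub g₂ g₃) :
    PSub g₁ g₃ := fun i b hb => h23 i b (h12 i b hb)

lemma psub_pdom {g g' : Fin N → Option Bool} (h : PSub g g') : pdom g ⊆ pdom g' := by
  intro i hi
  obtain ⟨b, hb⟩ := Option.isSome_iff_exists.mp (mem_pdom.mp hi)
  exact mem_pdom.mpr (by simp [h i b hb])

lemma psubF_of_psub {g g' : Fin N → Option Bool} {f : Fin N → Bool}
    (h : PSub g g') (hf : PSubF g' f) : PSubF g f := fun i b hb => hf i b (h i b hb)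

section Iterate

variable {k : ℕ} {φ : ℕ → ℕ} {t : Creature k N φ} {w : (Fin N → Bool) → ℝ}

lemma iterate (ht : 2 ≤ t.n) (hw : ∀ f ∈ t.P, w f ∈ Set.Icc (0:ℝ) 1)
    (hA : φ (k - t.n) + 2 ^ (2 ^ (k + 4) + 2) * 2 ^ (k + 3) ≤ φ (k - t.n + 1)) :
    ∀ m : ℕ, ∀ h : Fin N → Option Bool, PSub t.g h →
      (pdom h \ pdom t.g).card + m * 2 ^ (k + 3) ≤ 2 ^ (2 ^ (k + 4) + 2) * 2 ^ (k + 3) →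
      1 < avg t.P w h * (1 + ((2:ℝ) ^ (2 ^ k + 1 + 2 ^ (k + 3)))⁻¹) ^ m →
      ∃ s : Creature k N φ, SigmaRel s t ∧ t.n - 1 ≤ s.n ∧
        (1 - ((2:ℝ) ^ (2 ^ k + 1))⁻¹) * avg t.P w h ≤ Fstar s w := by
  set δ : ℝ := ((2:ℝ) ^ (2 ^ k + 1))⁻¹ with hδdef
  set ρ : ℝ := ((2:ℝ) ^ (2 ^ k + 1 + 2 ^ (k + 3)))⁻¹ with hρdef
  have hδ0 : 0 < δ := by positivity
  have hδ1 : δ ≤ 1 := by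
    rw [hδdef]
    apply inv_le_one_of_one_le₀
    exact one_le_pow₀ one_le_two
  have hρ0 : 0 < ρ := by positivity
  have hw0 : ∀ f ∈ t.P, 0 ≤ w f := fun f hf => (hw f hf).1
  have hw1 : ∀ f ∈ t.P, w f ≤ 1 := fun f hf => (hw f hf).2
  intro m
  induction m with
  | zero =>
    intro h _ _ hfuel
    exfalso
    have := avg_le_one hw1 hw0 h
    simp at hfuel
    linarith
  | succ m ih =>
    intro h hsubtg hcard hfuel
    have hppos : (0:ℝ) < (1 + ρ) ^ (m + 1) := by positivity
    have hpos : 0 < avg t.P w h := by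
      nlinarith [avg_le_one hw1 hw0 h]
    by_cases caseA : ∀ h' : Fin N → Option Bool, PSub h h' →
        (pdom h' \ pdom h).card ≤ 2 ^ (k + 3) → (1 - δ) * avg t.P w h ≤ avg t.P w h'
    · -- terminal case: build the creature
      have hsum_pos : (0:ℝ) < ∑ f ∈ t.P, (if PSubF h f then w f else 0) := by
        by_contra hc
        push_neg at hc
        have : avg t.P w h ≤ 0 := by
          unfold avg
          apply mul_nonpos_of_nonneg_of_nonpos (by positivity) hc
        linarith
      obtain ⟨f₀, hf₀P, hf₀ne⟩ := Finset.exists_ne_zero_of_sum_ne_zero (ne_of_gt hsum_pos)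
      have hf₀ : PSubF h f₀ := by
        by_contra hcon
        simp [hcon] at hf₀ne
      have hgsub : pdom t.g ⊆ pdom h := psub_pdom hsubtg
      have hcard2 : (pdom h).card ≤ φ (k - (t.n - 1)) := by
        have e1 : k - (t.n - 1) = k - t.n + 1 := by have := t.n_le; omega
        rw [e1]
        have e2 : (pdom h \ pdom t.g).card + (pdom t.g).card = (pdom h).card :=
          Finset.card_sdiff_add_card_eq_card hgsub
        have := t.g_card
        omega
      refine ⟨⟨t.n - 1, h, t.P.filter fun f => PSubF h f, by have := t.n_le; omega, hcard2,
        ⟨f₀, Finset.mem_filter.mpr ⟨hf₀P, hf₀⟩⟩, fun f hf => (Finset.mem_filter.mp hf).2⟩,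
        ⟨Nat.sub_le t.n 1, hsubtg, Finset.filter_subset _ _⟩, le_refl (t.n - 1), ?_⟩
      -- lower bound on Fstar
      apply le_csInf
      · exact ⟨_, h, psub_refl h, by simp, rfl⟩
      · rintro v ⟨h', hsub', hcard', rfl⟩
        have hsame : ∑ f ∈ t.P.filter (fun f => PSubF h f), (if PSubF h' f then w f else 0)
            = ∑ f ∈ t.P, (if PSubF h' f then w f else 0) := by
          apply Finset.sum_subset (Finset.filter_subset _ _)
          intro f hfP hfn
          have : ¬ PSubF h' f := by
            intro hc
            exact hfn (Finset.mem_filter.mpr ⟨hfP, psubF_of_psub hsub' hc⟩)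
          simp [this]
        have : (2 : ℝ) ^ (((pdom h').card : ℤ) - (N : ℤ)) *
            ∑ f ∈ t.P.filter (fun f => PSubF h f), (if PSubF h' f then w f else 0)
            = avg t.P w h' := by
          rw [hsame]; rfl
        rw [this]
        exact caseA h' hsub' hcard'
    · -- improvement case
      push_neg at caseA
      obtain ⟨h', hsub', hcard', hbad⟩ := caseA
      set E := pdom h' \ pdom h with hEdef
      have hdisj : Disjoint E (pdom h) := Finset.sdiff_disjoint
      have hmono : pdom h ⊆ pdom h' := psub_pdom hsub'
      by_cases hEne : E = ∅
      · exfalso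
        have hpe : pdom h' = pdom h := by
          have : pdom h' \ pdom h = ∅ := hEne
          have h1 : pdom h' ⊆ pdom h := by
            intro i hi
            by_contra hc
            exact absurd (Finset.mem_sdiff.mpr ⟨hi, hc⟩) (by simp [this])
          exact Finset.Subset.antisymm h1 hmono
        have : h' = h := by
          funext i
          rcases hh : h i with _ | b
          · have h2 : i ∉ pdom h' := by rw [hpe]; simp [mem_pdom, hh]
            have h3 : ¬ (h' i).isSome := fun hc => h2 (mem_pdom.mpr hc)
            exact Option.not_isSome_iff_eq_none.mp h3
          · exact hsub' i b hh
        rw [this] at hbad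
        nlinarith
      · have hEne' : E.Nonempty := Finset.nonempty_iff_ne_empty.mpr hEne
        set c : Fin N → Bool := fun i => (h' i).getD false with hcdef
        have hexteq : h' = ext h E c := by
          funext i
          by_cases hiE : i ∈ E
          · have hi' : i ∈ pdom h' := (Finset.mem_sdiff.mp hiE).1
            obtain ⟨b, hb⟩ := Option.isSome_iff_exists.mp (mem_pdom.mp hi')
            simp [ext, hiE, hcdef, hb]
          · by_cases hih : i ∈ pdom h
            · obtain ⟨b, hb⟩ := Option.isSome_iff_exists.mp (mem_pdom.mp hih)
              rw [hsub' i b hb]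
              simp [ext, hiE, hb]
            · have : i ∉ pdom h' := by
                intro hc
                exact hiE (Finset.mem_sdiff.mpr ⟨hc, hih⟩)
              have h1 : h' i = none := by
                by_contra hc
                exact this (mem_pdom.mpr (Option.ne_none_iff_isSome.mp hc))
              have h2 : h i = none := by
                by_contra hc
                exact hih (mem_pdom.mpr (Option.ne_none_iff_isSome.mp hc))
              simp [ext, hiE, h1, h2]
        obtain ⟨σ, hσ⟩ := improve hEne' hcard' hdisj hδ0
          (c := c) (by rw [← hexteq]; linarith) hpos
        have hρeq : δ / 2 ^ (2 ^ (k + 3)) = ρ := by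
          rw [hδdef, hρdef, div_eq_mul_inv, ← mul_inv, ← pow_add]
        rw [hρeq] at hσ
        set h'' := ext h E σ with hh''
        have hsub'' : PSub t.g h'' := psub_trans hsubtg (psub_ext σ hdisj)
        have hcard'' : (pdom h'' \ pdom t.g).card + m * 2 ^ (k + 3)
            ≤ 2 ^ (2 ^ (k + 4) + 2) * 2 ^ (k + 3) := by
          have e1 : pdom h'' = pdom h ∪ E := pdom_ext h E σ
          have e2 : pdom h'' \ pdom t.g ⊆ (pdom h \ pdom t.g) ∪ E := by
            rw [e1]
            intro i hi
            rcases Finset.mem_sdiff.mp hi with ⟨hiu, hig⟩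
            rcases Finset.mem_union.mp hiu with hih | hiE
            · exact Finset.mem_union_left _ (Finset.mem_sdiff.mpr ⟨hih, hig⟩)
            · exact Finset.mem_union_right _ hiE
          have e3 : (pdom h'' \ pdom t.g).card ≤ (pdom h \ pdom t.g).card + E.card :=
            le_trans (Finset.card_le_card e2) (Finset.card_union_le _ _)
          calc (pdom h'' \ pdom t.g).card + m * 2 ^ (k + 3)
              ≤ ((pdom h \ pdom t.g).card + E.card) + m * 2 ^ (k + 3) := by
                exact Nat.add_le_add_right e3 _
            _ ≤ ((pdom h \ pdom t.g).card + 2 ^ (k + 3)) + m * 2 ^ (k + 3) := by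
                exact Nat.add_le_add_right (Nat.add_le_add_left hcard' _) _
            _ = (pdom h \ pdom t.g).card + (m + 1) * 2 ^ (k + 3) := by ring
            _ ≤ 2 ^ (2 ^ (k + 4) + 2) * 2 ^ (k + 3) := hcard
        have hfuel'' : 1 < avg t.P w h'' * (1 + ρ) ^ m := by
          have e1 : avg t.P w h * (1 + ρ) ^ (m + 1) = (1 + ρ) * avg t.P w h * (1 + ρ) ^ m := by
            ring
          have e2 : (0:ℝ) < (1 + ρ) ^ m := by positivity
          nlinarith
        obtain ⟨s, hs1, hs2, hs3⟩ := ih h'' hsub'' hcard'' hfuel''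
        refine ⟨s, hs1, hs2, le_trans ?_ hs3⟩
        have : avg t.P w h ≤ avg t.P w h'' := by nlinarith
        nlinarith

end Iterate
end Aux

lemma budget (k : ℕ) (φ : ℕ → ℕ)
    (hφ2 : ∀ i : ℕ, (φ (i + 1) : ℝ) >
      (2 : ℝ) ^ (2 ^ (k + 3)) + (φ i : ℝ) +
        (2 : ℝ) ^ (2 * k + 7) / Real.logb 2 (1 + ((2 : ℝ) ^ (2 ^ (2 * k + 7)))⁻¹))
    (i : ℕ) :
    φ i + 2 ^ (2 ^ (k + 4) + 2) * 2 ^ (k + 3) ≤ φ (i + 1) := by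
  set x : ℝ := ((2 : ℝ) ^ (2 ^ (2 * k + 7)))⁻¹ with hxdef
  have hx0 : 0 < x := by positivity
  have hlog2 : (0.6931471803 : ℝ) < Real.log 2 := Real.log_two_gt_d9
  have hlogb_pos : 0 < Real.logb 2 (1 + x) := Real.logb_pos one_lt_two (by linarith)
  have hlogb_le : Real.logb 2 (1 + x) ≤ 2 * x := by
    rw [Real.logb, div_le_iff₀ (by linarith)]
    have h1 : Real.log (1 + x) ≤ x := by
      have := Real.log_le_sub_one_of_pos (show (0:ℝ) < 1 + x by linarith)
      linarith
    nlinarith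
  have hQ : (2 : ℝ) ^ (2 * k + 6) * (2 : ℝ) ^ (2 ^ (2 * k + 7))
      ≤ (2 : ℝ) ^ (2 * k + 7) / Real.logb 2 (1 + x) := by
    rw [le_div_iff₀ hlogb_pos]
    calc (2 : ℝ) ^ (2 * k + 6) * (2 : ℝ) ^ (2 ^ (2 * k + 7)) * Real.logb 2 (1 + x)
        ≤ (2 : ℝ) ^ (2 * k + 6) * (2 : ℝ) ^ (2 ^ (2 * k + 7)) * (2 * x) := by
          apply mul_le_mul_of_nonneg_left hlogb_le (by positivity)
      _ = (2 : ℝ) ^ (2 * k + 7) := by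
          rw [hxdef]
          field_simp
          ring
  have hexp : 2 ^ (k + 4) + 2 + (k + 3) ≤ 2 * k + 6 + 2 ^ (2 * k + 7) := by
    have h1 : 2 ^ (2 * k + 7) = 2 ^ (k + 4) * 2 ^ (k + 3) := by rw [← pow_add]; congr 1; omega
    have h2 : (8:ℕ) ≤ 2 ^ (k + 3) := by
      calc (8:ℕ) = 2 ^ 3 := by norm_num
        _ ≤ 2 ^ (k + 3) := Nat.pow_le_pow_right (by norm_num) (by omega)
    have h3 : k ≤ 2 ^ (k + 4) := le_of_lt (Nat.lt_of_lt_of_le (Nat.lt_two_pow_self (n := k))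
      (Nat.pow_le_pow_right (by norm_num) (by omega)))
    nlinarith
  have hbig : ((2 : ℝ) ^ (2 ^ (k + 4) + 2) * 2 ^ (k + 3) : ℝ)
      ≤ (2 : ℝ) ^ (2 * k + 6) * (2 : ℝ) ^ (2 ^ (2 * k + 7)) := by
    rw [← pow_add, ← pow_add]
    exact pow_le_pow_right₀ one_le_two hexp
  have hmain : (φ i : ℝ) + (2 : ℝ) ^ (2 ^ (k + 4) + 2) * 2 ^ (k + 3) ≤ (φ (i + 1) : ℝ) := by
    have := hφ2 i
    have hp : (0:ℝ) < (2 : ℝ) ^ (2 ^ (k + 3)) := by positivity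
    linarith
  exact_mod_cast hmain

/-- Lemma `prenullpres`: averaging the suprema `u(y)` over a finite
set `Y` almost preserves `γ·a`. (By convention `sSup ∅ = 0` in `ℝ`.) -/
theorem average_of_sups_lower_bound
    {α : Type*} (k : ℕ) (φ : ℕ → ℕ) (hφ : PhiCond k φ)
    (t : Creature k (Nval k φ) φ) (ht : 2 ≤ t.n)
    (γ : ℝ) (hγ : γ ∈ Set.Icc (0 : ℝ) 1)
    (r : (Fin (Nval k φ) → Bool) → ℝ) (hr : ∀ f ∈ t.P, r f ∈ Set.Icc (0 : ℝ) 1)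
    (a : ℝ) (ha : a = Fstar t r)
    (haγ : ((2 : ℝ) ^ (6 * 2 ^ k))⁻¹ ≤ γ * a)
    (Y : Finset α) (hY : Y.Nonempty)
    (u : (Fin (Nval k φ) → Bool) → α → ℝ)
    (hu1 : ∀ f ∈ t.P, ∀ y ∈ Y, u f y ∈ Set.Icc (0 : ℝ) 1)
    (hu2 : ∀ f ∈ t.P, γ * r f * (Y.card : ℝ) ≤ ∑ y ∈ Y, u f y) :
    γ * a * (1 - ((2 : ℝ) ^ (2 ^ k))⁻¹) ≤
      (∑ y ∈ Y, sSup {b : ℝ | ∃ s : Creature k (Nval k φ) φ,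
          SigmaRel s t ∧ t.n - 1 ≤ s.n ∧ b ≤ Fstar s (fun f => u f y)}) /
        (Y.card : ℝ) := by
  classical
  set δ : ℝ := ((2:ℝ) ^ (2 ^ k + 1))⁻¹ with hδdef
  set ρ : ℝ := ((2:ℝ) ^ (2 ^ k + 1 + 2 ^ (k + 3)))⁻¹ with hρdef
  set τ : ℝ := ((2:ℝ) ^ (7 * 2 ^ k + 1))⁻¹ with hτdef
  have hδ0 : 0 < δ := by positivity
  have hρ0 : 0 < ρ := by positivity
  have hτ0 : 0 < τ := by positivity
  have hδ1 : δ ≤ 1 := by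
    rw [hδdef]
    exact inv_le_one_of_one_le₀ (one_le_pow₀ one_le_two)
  have hγ0 : 0 ≤ γ := hγ.1
  have hX0 : 0 < γ * a := lt_of_lt_of_le (by positivity) haγ
  have hYc : (0:ℝ) < (Y.card : ℝ) := by exact_mod_cast hY.card_pos
  have hA : φ (k - t.n) + 2 ^ (2 ^ (k + 4) + 2) * 2 ^ (k + 3) ≤ φ (k - t.n + 1) :=
    budget k φ hφ.2 (k - t.n)
  -- the per-y lower bound on the supremum
  have hper : ∀ y ∈ Y, (1 - δ) * avg t.P (fun f => u f y) t.g - τ ≤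
      sSup {b : ℝ | ∃ s : Creature k (Nval k φ) φ,
        SigmaRel s t ∧ t.n - 1 ≤ s.n ∧ b ≤ Fstar s (fun f => u f y)} := by
    intro y hy
    have hwIcc : ∀ f ∈ t.P, u f y ∈ Set.Icc (0:ℝ) 1 := fun f hf => hu1 f hf y hy
    have hF0 : ∀ s : Creature k (Nval k φ) φ, SigmaRel s t →
        0 ≤ Fstar s (fun f => u f y) := by
      intro s hs
      apply le_csInf
      · exact ⟨_, ⟨s.g, psub_refl s.g, by simp, rfl⟩⟩
      rintro v ⟨h, _, _, rfl⟩
      apply mul_nonneg (by positivity)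
      apply Finset.sum_nonneg
      intro f hf
      have hfP : f ∈ t.P := hs.2.2 hf
      by_cases hc : PSubF h f <;> simp [hc, (hwIcc f hfP).1]
    have hFle : ∀ s : Creature k (Nval k φ) φ, SigmaRel s t →
        Fstar s (fun f => u f y) ≤ 1 := by
      intro s hs
      have hle : Fstar s (fun f => u f y) ≤ avg s.P (fun f => u f y) s.g := by
        apply csInf_le
        · refine ⟨0, ?_⟩
          rintro v ⟨h, _, _, rfl⟩
          apply mul_nonneg (by positivity)
          apply Finset.sum_nonneg
          intro f hf
          have hfP : f ∈ t.P := hs.2.2 hf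
          by_cases hc : PSubF h f <;> simp [hc, (hwIcc f hfP).1]
        · exact ⟨s.g, psub_refl s.g, by simp, rfl⟩
      refine le_trans hle (avg_le_one ?_ ?_ _)
      · exact fun f hf => (hwIcc f (hs.2.2 hf)).2
      · exact fun f hf => (hwIcc f (hs.2.2 hf)).1
    have hrel : SigmaRel t t := ⟨le_refl _, psub_refl _, Finset.Subset.refl _⟩
    have hbddS : BddAbove {b : ℝ | ∃ s : Creature k (Nval k φ) φ,
        SigmaRel s t ∧ t.n - 1 ≤ s.n ∧ b ≤ Fstar s (fun f => u f y)} := by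
      refine ⟨1, ?_⟩
      rintro b ⟨s, hs, _, hb⟩
      exact le_trans hb (hFle s hs)
    have hv0 : 0 ≤ avg t.P (fun f => u f y) t.g :=
      avg_nonneg (fun f hf => (hwIcc f hf).1) _
    by_cases hcase : τ ≤ avg t.P (fun f => u f y) t.g
    · -- apply the iteration lemma
      have hfuel : 1 < avg t.P (fun f => u f y) t.g *
          (1 + ρ) ^ (2 ^ (2 ^ (k + 4) + 2)) := by
        have h1 : 1 + ((2 ^ (2 ^ (k + 4) + 2) : ℕ) : ℝ) * ρ
            ≤ (1 + ρ) ^ (2 ^ (2 ^ (k + 4) + 2)) :=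
          one_add_mul_le_pow (by linarith) _
        have h2 : ((2 ^ (2 ^ (k + 4) + 2) : ℕ) : ℝ) * ρ = τ⁻¹ := by
          rw [hρdef, hτdef, inv_inv]
          push_cast
          have e1 : (2:ℝ) ^ (2 ^ (k + 4) + 2)
              = 2 ^ (7 * 2 ^ k + 1) * 2 ^ (2 ^ k + 1 + 2 ^ (k + 3)) := by
            rw [← pow_add]
            congr 1
            have e2 : 2 ^ (k + 3) = 8 * 2 ^ k := by rw [pow_add]; ring
            have e3 : 2 ^ (k + 4) = 16 * 2 ^ k := by rw [pow_add]; ring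
            omega
          rw [e1, mul_assoc, mul_inv_cancel₀ (by positivity), mul_one]
        rw [h2] at h1
        have h3 : τ * (1 + τ⁻¹) ≤ τ * (1 + ρ) ^ (2 ^ (2 ^ (k + 4) + 2)) :=
          mul_le_mul_of_nonneg_left h1 hτ0.le
        have h4 : τ * (1 + τ⁻¹) = τ + 1 := by
          rw [mul_add, mul_one, mul_inv_cancel₀ (ne_of_gt hτ0)]
        have h5 : τ * (1 + ρ) ^ (2 ^ (2 ^ (k + 4) + 2)) ≤
            avg t.P (fun f => u f y) t.g * (1 + ρ) ^ (2 ^ (2 ^ (k + 4) + 2)) :=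
          mul_le_mul_of_nonneg_right hcase (by positivity)
        linarith
      obtain ⟨s, hs1, hs2, hs3⟩ := iterate ht hwIcc hA (2 ^ (2 ^ (k + 4) + 2)) t.g
        (psub_refl t.g) (by simp) hfuel
      have hmem : (1 - δ) * avg t.P (fun f => u f y) t.g ∈
          {b : ℝ | ∃ s : Creature k (Nval k φ) φ,
            SigmaRel s t ∧ t.n - 1 ≤ s.n ∧ b ≤ Fstar s (fun f => u f y)} :=
        ⟨s, hs1, hs2, hs3⟩
      have := le_csSup hbddS hmem
      linarith
    · push_neg at hcase
      have h0mem : (0:ℝ) ∈ {b : ℝ | ∃ s : Creature k (Nval k φ) φ,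
          SigmaRel s t ∧ t.n - 1 ≤ s.n ∧ b ≤ Fstar s (fun f => u f y)} :=
        ⟨t, hrel, Nat.sub_le _ _, hF0 t hrel⟩
      have h0le := le_csSup hbddS h0mem
      nlinarith [mul_nonneg hδ0.le hv0]
  -- lower bound for the sum of the averages
  have havg_r : a ≤ avg t.P r t.g := by
    rw [ha]
    apply csInf_le
    · refine ⟨0, ?_⟩
      rintro v ⟨h, _, _, rfl⟩
      apply mul_nonneg (by positivity)
      apply Finset.sum_nonneg
      intro f hf
      by_cases hc : PSubF h f <;> simp [hc, (hr f hf).1]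
    · exact ⟨t.g, psub_refl t.g, by simp, rfl⟩
  have hsum1 : γ * a * (Y.card : ℝ) ≤ ∑ y ∈ Y, avg t.P (fun f => u f y) t.g := by
    have step1 : γ * a * (Y.card : ℝ) ≤ γ * avg t.P r t.g * (Y.card : ℝ) := by
      apply mul_le_mul_of_nonneg_right (mul_le_mul_of_nonneg_left havg_r hγ0) hYc.le
    have step2 : γ * avg t.P r t.g * (Y.card : ℝ)
        = (2 : ℝ) ^ (((pdom t.g).card : ℤ) - ((Nval k φ) : ℤ)) *
          ∑ f ∈ t.P, (if PSubF t.g f then γ * r f * (Y.card : ℝ) else 0) := by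
      have e : ∑ f ∈ t.P, (if PSubF t.g f then γ * r f * (Y.card : ℝ) else 0)
          = γ * (Y.card : ℝ) * ∑ f ∈ t.P, (if PSubF t.g f then r f else 0) := by
        rw [Finset.mul_sum]
        apply Finset.sum_congr rfl
        intro f _
        by_cases hc : PSubF t.g f <;> simp [hc] <;> ring
      rw [e, avg]
      ring
    have step3 : (2 : ℝ) ^ (((pdom t.g).card : ℤ) - ((Nval k φ) : ℤ)) *
          ∑ f ∈ t.P, (if PSubF t.g f then γ * r f * (Y.card : ℝ) else 0)
        ≤ (2 : ℝ) ^ (((pdom t.g).card : ℤ) - ((Nval k φ) : ℤ)) *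
          ∑ f ∈ t.P, (if PSubF t.g f then ∑ y ∈ Y, u f y else 0) := by
      apply mul_le_mul_of_nonneg_left _ (by positivity)
      apply Finset.sum_le_sum
      intro f hf
      by_cases hc : PSubF t.g f
      · simpa [hc] using hu2 f hf
      · simp [hc]
    have step4 : (2 : ℝ) ^ (((pdom t.g).card : ℤ) - ((Nval k φ) : ℤ)) *
          ∑ f ∈ t.P, (if PSubF t.g f then ∑ y ∈ Y, u f y else 0)
        = ∑ y ∈ Y, avg t.P (fun f => u f y) t.g := by
      have e1 : ∑ y ∈ Y, avg t.P (fun f => u f y) t.g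
          = (2 : ℝ) ^ (((pdom t.g).card : ℤ) - ((Nval k φ) : ℤ)) *
            ∑ y ∈ Y, ∑ f ∈ t.P, (if PSubF t.g f then u f y else 0) := by
        rw [Finset.mul_sum]
        rfl
      have e2 : ∑ y ∈ Y, ∑ f ∈ t.P, (if PSubF t.g f then u f y else 0)
          = ∑ f ∈ t.P, (if PSubF t.g f then ∑ y ∈ Y, u f y else 0) := by
        rw [Finset.sum_comm]
        apply Finset.sum_congr rfl
        intro f _
        by_cases hc : PSubF t.g f <;> simp [hc]
      rw [e1, e2]
    calc γ * a * (Y.card : ℝ) ≤ _ := step1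
      _ = _ := step2
      _ ≤ _ := step3
      _ = _ := step4
  -- put it all together
  rw [le_div_iff₀ hYc]
  have hsum2 : ∑ y ∈ Y, ((1 - δ) * avg t.P (fun f => u f y) t.g - τ) ≤
      ∑ y ∈ Y, sSup {b : ℝ | ∃ s : Creature k (Nval k φ) φ,
        SigmaRel s t ∧ t.n - 1 ≤ s.n ∧ b ≤ Fstar s (fun f => u f y)} :=
    Finset.sum_le_sum hper
  have hsum3 : ∑ y ∈ Y, ((1 - δ) * avg t.P (fun f => u f y) t.g - τ)
      = (1 - δ) * (∑ y ∈ Y, avg t.P (fun f => u f y) t.g) - τ * (Y.card : ℝ) := by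
    rw [Finset.sum_sub_distrib, ← Finset.mul_sum, Finset.sum_const, nsmul_eq_mul]
    ring
  have hεδ : ((2:ℝ) ^ (2 ^ k))⁻¹ = 2 * δ := by
    rw [hδdef, pow_succ]
    field_simp
  have hτδ : ((2:ℝ) ^ (6 * 2 ^ k))⁻¹ * δ = τ := by
    rw [hδdef, hτdef, ← mul_inv, ← pow_add]
    congr 1
    ring
  have h6 : τ ≤ γ * a * δ := by
    rw [← hτδ]
    exact mul_le_mul_of_nonneg_right haγ hδ0.le
  have h7 : (1 - δ) * (γ * a * (Y.card : ℝ)) ≤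
      (1 - δ) * ∑ y ∈ Y, avg t.P (fun f => u f y) t.g :=
    mul_le_mul_of_nonneg_left hsum1 (by linarith)
  have h8 : τ * (Y.card : ℝ) ≤ γ * a * δ * (Y.card : ℝ) :=
    mul_le_mul_of_nonneg_right h6 hYc.le
  rw [hεδ]
  nlinarith [hsum2, hsum3, h7, h8, mul_pos hX0 hYc, mul_nonneg (mul_nonneg hX0.le hδ0.le) hYc.le]

end MeasuredCreatures
end

section
/- Let p ∈ Q^tree_∅(K,Σ). Then: (1) if μ : T^p → [0,1] is a semi-F-measure on p, then μ(η) ≤ μ^F_p(η) for every η ∈ T^p; (2) if there is a semi-F-measure μ on p with μ(root(T^p)) > 0, then p ∈ Q^mt_∅(K,Σ,F); (3) if p ∈ Q^mt_∅(K,Σ,F), then the map η ↦ μ^F_p(η) : T^p → [0,1] is an F-measure on p. -/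
/-!
Everything rests on bar induction over fronts: a property that holds on a front and passes to a
node from all of its successors holds at the root, since a counterexample would propagate along a
branch avoiding the front. By monotonicity (α) this shows that each `μ^{1_A}` takes values in
`[0,1]` and dominates every semi-`F`-measure, which gives (1) and (2). For (3), restricting a
front to the cone above a successor gives `F(μ^F) ≤ μ^F`; gluing near-optimal fronts above the
successors and using (δ) gives the reverse inequality.
-/

namespace MeasuredTrees

/-- `η` is a valid node for `H`: a finite sequence with `η i ∈ H i` for all `i < lh η`. -/
def ValidNode (H : ℕ → Finset ℕ) (η : List ℕ) : Prop :=
  ∀ (i : ℕ) (h : i < η.length), η.get ⟨i, h⟩ ∈ H i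

/-- A local tree-creature for `H`: a node `η_t`, a nonnegative norm, and a nonempty set
`pos(t)` of nodes of length `lh(η_t)+1` properly extending `η_t`. -/
structure TCreature (H : ℕ → Finset ℕ) where
  node : List ℕ
  node_ok : ValidNode H node
  nor : ℝ
  nor_nonneg : 0 ≤ nor
  pos : Finset (List ℕ)
  pos_ne : pos.Nonempty
  pos_ok : ∀ ν ∈ pos, node <+: ν ∧ ν.length = node.length + 1 ∧ ValidNode H ν

/-- A measured tree creating triple `(K, Σ, F)` for `H` (data part). -/
structure MTriple (H : ℕ → Finset ℕ) where
  K : Set (TCreature H)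
  Sig : TCreature H → Set (TCreature H)
  F : TCreature H → (List ℕ → ℝ) → ℝ

variable {H : ℕ → Finset ℕ}

/-- The structural requirements: `(K,Σ)` is a strongly finitary local tree-creating
pair, each `H m` has at least two elements, and each `F t` is a map
`[0,1]^{pos t} → [0,1]` (represented on total functions, depending only on the
values on `pos t`). -/
structure MTriple.Good (T : MTriple H) : Prop where
  H_two : ∀ m : ℕ, 2 ≤ (H m).card
  sig_mem : ∀ t ∈ T.K, T.Sig t ⊆ T.K
  sig_node : ∀ t s : TCreature H, s ∈ T.Sig t → s.node = t.node
  sig_pos : ∀ t s : TCreature H, s ∈ T.Sig t → s.pos ⊆ t.pos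
  sig_trans : ∀ t s : TCreature H, s ∈ T.Sig t → T.Sig s ⊆ T.Sig t
  finitary : ∀ η : List ℕ, {t : TCreature H | t ∈ T.K ∧ t.node = η}.Finite
  F_congr : ∀ (t : TCreature H) (r r' : List ℕ → ℝ),
    (∀ ν ∈ t.pos, r ν = r' ν) → T.F t r = T.F t r'
  F_mem : ∀ (t : TCreature H) (r : List ℕ → ℝ),
    (∀ ν ∈ t.pos, r ν ∈ Set.Icc (0 : ℝ) 1) → T.F t r ∈ Set.Icc (0 : ℝ) 1

/-- The triple is nice: monotonicity (α), splitting (β), homogeneity (γ) and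
approximation (δ). -/
structure MTriple.Nice (T : MTriple H) : Prop where
  mono : ∀ t ∈ T.K, ∀ r r' : List ℕ → ℝ,
    (∀ ν ∈ t.pos, r ν ∈ Set.Icc (0 : ℝ) 1) → (∀ ν ∈ t.pos, r' ν ∈ Set.Icc (0 : ℝ) 1) →
    (∀ ν ∈ t.pos, r ν ≤ r' ν) → T.F t r ≤ T.F t r'
  split : ∀ t ∈ T.K, 1 < t.nor →
    ∀ r r0 r1 : List ℕ → ℝ,
    (∀ ν ∈ t.pos, r ν ∈ Set.Icc (0 : ℝ) 1 ∧ r0 ν ∈ Set.Icc (0 : ℝ) 1 ∧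
      r1 ν ∈ Set.Icc (0 : ℝ) 1) →
    (∀ ν ∈ t.pos, r ν ≤ r0 ν + r1 ν) →
    ((2 : ℝ) ^ (2 ^ t.node.length))⁻¹ ≤ T.F t r →
    ∃ c0 c1 : ℝ, ∃ s0 s1 : TCreature H, s0 ∈ T.Sig t ∧ s1 ∈ T.Sig t ∧
      c0 + c1 = (1 - ((2 : ℝ) ^ (2 ^ t.node.length))⁻¹) * T.F t r ∧
      (0 < c0 → t.nor - 1 ≤ s0.nor ∧ (∀ ν ∈ s0.pos, 0 < r0 ν) ∧ c0 ≤ T.F s0 r0) ∧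
      (0 < c1 → t.nor - 1 ≤ s1.nor ∧ (∀ ν ∈ s1.pos, 0 < r1 ν) ∧ c1 ≤ T.F s1 r1)
  scale : ∀ t ∈ T.K, ∀ b : ℝ, b ∈ Set.Icc (0 : ℝ) 1 →
    ∀ r : List ℕ → ℝ, (∀ ν ∈ t.pos, r ν ∈ Set.Icc (0 : ℝ) 1) →
    T.F t (fun ν => b * r ν) = b * T.F t r
  approx : ∀ t ∈ T.K, ∀ r : List ℕ → ℝ, (∀ ν ∈ t.pos, r ν ∈ Set.Icc (0 : ℝ) 1) →
    ∀ ε : ℝ, 0 < ε →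
    ∃ r' : List ℕ → ℝ, (∀ ν ∈ t.pos, r ν < r' ν) ∧
      ∀ r'' : List ℕ → ℝ, (∀ ν ∈ t.pos, r'' ν ∈ Set.Icc (0 : ℝ) 1) →
        (∀ ν ∈ t.pos, r ν ≤ r'' ν ∧ r'' ν < r' ν) → T.F t r'' < T.F t r + ε

/-- A condition of `Q^tree_∅(K,Σ)`: a tree of nodes with no maximal elements,
together with a creature of `K` at every node whose possibilities are exactly the
successors in the tree. -/
structure Cond (T : MTriple H) where
  tree : Set (List ℕ)
  root : List ℕ
  root_mem : root ∈ tree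
  root_le : ∀ η ∈ tree, root <+: η
  closed : ∀ η ∈ tree, ∀ ν : List ℕ, root <+: ν → ν <+: η → ν ∈ tree
  c : List ℕ → TCreature H
  c_mem : ∀ η ∈ tree, c η ∈ T.K
  c_node : ∀ η ∈ tree, (c η).node = η
  succ_eq : ∀ η ∈ tree, ∀ ν : List ℕ,
    ((ν ∈ tree ∧ η <+: ν ∧ ν.length = η.length + 1) ↔ ν ∈ (c η).pos)

variable {T : MTriple H}

/-- The initial segment of length `n` of an infinite sequence. -/
def initSeg (x : ℕ → ℕ) (n : ℕ) : List ℕ := (List.range n).map x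

/-- `x` is an ω-branch of the tree of `p` through the node `η`. -/
def IsBranchAt (p : Cond T) (η : List ℕ) (x : ℕ → ℕ) : Prop :=
  initSeg x η.length = η ∧ ∀ n : ℕ, η.length ≤ n → initSeg x n ∈ p.tree

/-- `A` is a front of the tree of `p^{[η]}`: a set of nodes of the tree extending `η`
met by every ω-branch through `η`. -/
def IsFrontAt (p : Cond T) (η : List ℕ) (A : Set (List ℕ)) : Prop :=
  (∀ ρ ∈ A, ρ ∈ p.tree ∧ η <+: ρ) ∧
  ∀ x : ℕ → ℕ, IsBranchAt p η x → ∃ n : ℕ, initSeg x n ∈ A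

/-- `ρ ∈ T[p^{[η]}, A]`, i.e. `ρ` is a node of the tree of `p` extending `η` and lying
(weakly) below some member of `A`. -/
def InCone (p : Cond T) (η : List ℕ) (A : Set (List ℕ)) (ρ : List ℕ) : Prop :=
  ρ ∈ p.tree ∧ η <+: ρ ∧ ∃ ν ∈ A, ρ <+: ν

/-- `m` is the function `μ^f_{p^{[η]},A}` (extended by `0` off `T[p^{[η]},A]`):
it equals `f` on `A` and satisfies the downward recursion
`m ρ = F_{t^p_ρ}(m ν : ν ∈ pos(t^p_ρ))` on `T[p^{[η]},A] ∖ A`. -/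
def IsMuAt (p : Cond T) (η : List ℕ) (A : Set (List ℕ))
    (f : List ℕ → ℝ) (m : List ℕ → ℝ) : Prop :=
  (∀ ρ ∈ A, m ρ = f ρ) ∧
  (∀ ρ : List ℕ, InCone p η A ρ → ρ ∉ A → m ρ = T.F (p.c ρ) m) ∧
  (∀ ρ : List ℕ, ¬ InCone p η A ρ → m ρ = 0)

/-- `μ^F_p(η)`: the infimum over fronts `A` of `p^{[η]}` of `μ^{1_A}_{p^{[η]},A}(η)`. -/
noncomputable def muAt (p : Cond T) (η : List ℕ) : ℝ :=
  sInf {x : ℝ | ∃ (A : Set (List ℕ)) (m : List ℕ → ℝ),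
    IsFrontAt p η A ∧ IsMuAt p η A (fun _ => 1) m ∧ x = m η}

/-- `μ^F(p) = μ^F_p(root p)`. -/
noncomputable def muF (p : Cond T) : ℝ := muAt p p.root

/-- The norm condition (c)₄ defining `Q^tree_4(K,Σ)` : for every `n` the set of nodes
above which all norms are at least `n` contains a front. -/
def Qtree4 (p : Cond T) : Prop :=
  ∀ n : ℕ, ∃ A : Set (List ℕ), IsFrontAt p p.root A ∧
    ∀ ν ∈ A, ∀ ρ ∈ p.tree, ν <+: ρ → (n : ℝ) ≤ (p.c ρ).nor

/-- The order on conditions: `p ≤ q` iff the tree of `q` is contained in that of `p`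
and each creature of `q` belongs to `Σ` of the corresponding creature of `p`. -/
def CondLe (p q : Cond T) : Prop :=
  q.tree ⊆ p.tree ∧ ∀ η ∈ q.tree, q.c η ∈ T.Sig (p.c η)

/-- `p` is normal: `μ^F_p(η) > 0` for every node `η` of the tree of `p`. -/
def Normal (p : Cond T) : Prop := ∀ η ∈ p.tree, 0 < muAt p η

/-- `p` is special: `μ^F_p(η) ≥ 2^(−2^(lh η + 1))` for every node `η`. -/
def Special (p : Cond T) : Prop :=
  ∀ η ∈ p.tree, ((2 : ℝ) ^ (2 ^ (η.length + 1)))⁻¹ ≤ muAt p η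

/-- `m` is a semi-`F`-measure on `p`: a `[0,1]`-valued function on the tree of `p` with
`m η ≤ F_{t^p_η}(m ν : ν ∈ pos(t^p_η))` for all nodes `η`. -/
def IsSemiMeasure (p : Cond T) (m : List ℕ → ℝ) : Prop :=
  (∀ η ∈ p.tree, m η ∈ Set.Icc (0 : ℝ) 1) ∧
  ∀ η ∈ p.tree, m η ≤ T.F (p.c η) m

theorem _root_.List.IsPrefix.eq_or_eq_of_length_succ {α : Type*} {l₁ l l₂ : List α} (h₁ : l₁ <+: l)
    (h₂ : l <+: l₂) (hlen : l₂.length = l₁.length + 1) : l = l₁ ∨ l = l₂ := by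
  rcases Nat.lt_or_ge l₁.length l.length with h | h
  · exact .inr (h₂.eq_of_length (by have := h₂.length_le; omega))
  · exact .inl (h₁.eq_of_length (le_antisymm h₁.length_le h)).symm

theorem initSeg_length (x : ℕ → ℕ) (n : ℕ) : (initSeg x n).length = n := by
  simp [initSeg]

theorem initSeg_take (x : ℕ → ℕ) {m n : ℕ} (h : m ≤ n) :
    (initSeg x n).take m = initSeg x m := by
  rw [initSeg, initSeg, ← List.map_take, List.take_range, min_eq_left h]

theorem initSeg_prefix_initSeg (x : ℕ → ℕ) {m n : ℕ} (h : m ≤ n) :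
    initSeg x m <+: initSeg x n := by
  rw [← initSeg_take x h]
  exact List.take_prefix _ _

theorem exists_initSeg_eq_of_prefix_chain (g : ℕ → List ℕ) (hg : ∀ n, g n <+: g (n + 1))
    (hlen : ∀ n, (g n).length = (g 0).length + n) :
    ∃ x : ℕ → ℕ, ∀ n, initSeg x ((g 0).length + n) = g n := by
  have mono : ∀ {m n}, m ≤ n → g m <+: g n := by
    intro m n h
    induction n, h using Nat.le_induction with
    | base => exact List.prefix_refl _
    | succ n _ ih => exact ih.trans (hg n)
  refine ⟨fun k => (g (k + 1)).getD k 0, fun n =>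
    List.ext_getElem (by rw [initSeg_length, hlen n]) fun k _ hk => ?_⟩
  have hk' : k < (g (k + 1)).length := by rw [hlen]; omega
  simp only [initSeg, List.getElem_map, List.getElem_range, List.getD_eq_getElem _ _ hk']
  -- `g (k + 1)` and `g n` are both prefixes of `g (k + 1 + n)`
  rw [(mono (Nat.le_add_right (k + 1) n)).getElem hk',
    (mono (Nat.le_add_left n (k + 1))).getElem hk]

theorem exists_initSeg_mem_of_forall_exists_succ {S : Set (List ℕ)}
    (hS : ∀ ρ ∈ S, ∃ ν ∈ S, ρ <+: ν ∧ ν.length = ρ.length + 1) {η : List ℕ} (hη : η ∈ S) :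
    ∃ x : ℕ → ℕ, initSeg x η.length = η ∧ ∀ n, η.length ≤ n → initSeg x n ∈ S := by
  choose! next hnextS hnext hnextlen using hS
  have hg : ∀ n, next^[n] η ∈ S ∧ (next^[n] η).length = η.length + n := by
    intro n
    induction n with
    | zero => exact ⟨hη, rfl⟩
    | succ n ih =>
      rw [Function.iterate_succ_apply']
      exact ⟨hnextS _ ih.1, by rw [hnextlen _ ih.1, ih.2]; rfl⟩
  obtain ⟨x, hx⟩ := exists_initSeg_eq_of_prefix_chain (fun n => next^[n] η)
    (fun n => by rw [Function.iterate_succ_apply']; exact hnext _ (hg n).1) (fun n => (hg n).2)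
  refine ⟨x, hx 0, fun n hn => ?_⟩
  obtain ⟨k, rfl⟩ := Nat.exists_eq_add_of_le hn
  exact (hx k).symm ▸ (hg k).1

variable {p : Cond T} {η ν : List ℕ} {x : ℕ → ℕ} {A : Set (List ℕ)}

theorem IsBranchAt.prefix_initSeg (hx : IsBranchAt p η x) {n : ℕ} (hn : η.length ≤ n) :
    η <+: initSeg x n :=
  hx.1 ▸ initSeg_prefix_initSeg x hn

theorem IsBranchAt.initSeg_prefix (hx : IsBranchAt p η x) {n : ℕ} (hn : n ≤ η.length) :
    initSeg x n <+: η :=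
  hx.1 ▸ initSeg_prefix_initSeg x hn

theorem IsBranchAt.at_initSeg (hx : IsBranchAt p η x) {n : ℕ} (hn : η.length ≤ n) :
    IsBranchAt p (initSeg x n) x :=
  ⟨by rw [initSeg_length], fun k hk => hx.2 k (by rw [initSeg_length] at hk; omega)⟩

theorem IsBranchAt.of_prefix (hx : IsBranchAt p ν x) (hη : η ∈ p.tree) (hην : η <+: ν) :
    IsBranchAt p η x := by
  have hxη : initSeg x η.length = η := by
    rw [← initSeg_take x hην.length_le, hx.1, ← List.prefix_iff_eq_take.mp hην]
  refine ⟨hxη, fun n hn => ?_⟩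
  rcases le_total ν.length n with h | h
  · exact hx.2 n h
  · have hν : ν ∈ p.tree := hx.1 ▸ hx.2 _ le_rfl
    exact p.closed ν hν _ ((p.root_le η hη).trans (hxη ▸ initSeg_prefix_initSeg x hn))
      (hx.initSeg_prefix h)

theorem IsFrontAt.induction (hA : IsFrontAt p η A) (hη : η ∈ p.tree) {P : List ℕ → Prop}
    (mem : ∀ ρ ∈ A, P ρ)
    (step : ∀ ρ ∈ p.tree, η <+: ρ → ρ ∉ A → (∀ ν ∈ (p.c ρ).pos, P ν) → P ρ) : P η := by
  by_contra hPη
  set S := {ρ | ρ ∈ p.tree ∧ η <+: ρ ∧ ¬ P ρ}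
  have hS : ∀ ρ ∈ S, ∃ ν ∈ S, ρ <+: ν ∧ ν.length = ρ.length + 1 := by
    rintro ρ ⟨hρ, hηρ, hPρ⟩
    obtain ⟨ν, hν, hPν⟩ : ∃ ν ∈ (p.c ρ).pos, ¬ P ν := by
      by_contra! h
      exact hPρ (step ρ hρ hηρ (fun hρA => hPρ (mem ρ hρA)) h)
    obtain ⟨hνt, hρν, hlen⟩ := (p.succ_eq ρ hρ ν).2 hν
    exact ⟨ν, ⟨hνt, hηρ.trans hρν, hPν⟩, hρν, hlen⟩
  obtain ⟨x, hx, hxS⟩ := exists_initSeg_mem_of_forall_exists_succ hS ⟨hη, List.prefix_refl η, hPη⟩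
  obtain ⟨n, hn⟩ := hA.2 x ⟨hx, fun n hn => (hxS n hn).1⟩
  have hηn : η.length ≤ n := by simpa only [initSeg_length] using (hA.1 _ hn).2.length_le
  exact (hxS n hηn).2.2 (mem _ hn)

theorem IsFrontAt.inCone_root (hA : IsFrontAt p η A) (hη : η ∈ p.tree) : InCone p η A η := by
  refine ⟨hη, List.prefix_refl η, hA.induction hη (P := fun ρ => ∃ σ ∈ A, ρ <+: σ)
    (fun ρ hρ => ⟨ρ, hρ, List.prefix_refl ρ⟩) fun ρ hρ _ _ ih => ?_⟩
  obtain ⟨ν, hν⟩ := (p.c ρ).pos_ne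
  obtain ⟨σ, hσ, hνσ⟩ := ih ν hν
  exact ⟨σ, hσ, ((p.succ_eq ρ hρ ν).2 hν).2.1.trans hνσ⟩

theorem isFrontAt_singleton (hη : η ∈ p.tree) : IsFrontAt p η {η} :=
  ⟨fun ρ hρ => by rw [Set.mem_singleton_iff.mp hρ]; exact ⟨hη, List.prefix_refl η⟩,
    fun _ hx => ⟨η.length, hx.1⟩⟩

theorem IsFrontAt.restrict (hA : IsFrontAt p η A) (hη : η ∈ p.tree) (hην : η <+: ν)
    (hfresh : ∀ σ ∈ A, σ <+: ν → σ = ν) : IsFrontAt p ν {ρ ∈ A | ν <+: ρ} := by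
  refine ⟨fun ρ hρ => ⟨(hA.1 ρ hρ.1).1, hρ.2⟩, fun x hx => ?_⟩
  obtain ⟨n, hn⟩ := hA.2 x (hx.of_prefix hη hην)
  refine ⟨n, hn, ?_⟩
  rcases le_total n ν.length with h | h
  · rw [hfresh _ hn (hx.initSeg_prefix h)]
  · exact hx.prefix_initSeg h

theorem IsFrontAt.biUnion (hη : η ∈ p.tree) {A : List ℕ → Set (List ℕ)}
    (hA : ∀ ν ∈ (p.c η).pos, IsFrontAt p ν (A ν)) :
    IsFrontAt p η (⋃ ν ∈ (p.c η).pos, A ν) := by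
  constructor
  · simp only [Set.mem_iUnion]
    rintro ρ ⟨ν, hν, hρ⟩
    obtain ⟨hρt, hνρ⟩ := (hA ν hν).1 ρ hρ
    exact ⟨hρt, ((p.succ_eq η hη ν).2 hν).2.1.trans hνρ⟩
  · intro x hx
    have hν : initSeg x (η.length + 1) ∈ (p.c η).pos := (p.succ_eq η hη _).1
      ⟨hx.2 _ (Nat.le_succ _), hx.prefix_initSeg (Nat.le_succ _), initSeg_length x _⟩
    obtain ⟨n, hn⟩ := (hA _ hν).2 x (hx.at_initSeg (Nat.le_succ _))
    exact ⟨n, Set.mem_biUnion hν hn⟩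

theorem isSemiMeasure_zero (hG : T.Good) (p : Cond T) : IsSemiMeasure p 0 :=
  ⟨fun _ _ => ⟨le_rfl, zero_le_one⟩,
    fun η _ => (hG.F_mem (p.c η) 0 fun _ _ => ⟨le_rfl, zero_le_one⟩).1⟩

theorem IsMuAt.mem_Icc_and_le (hG : T.Good) (hN : T.Nice) (hη : η ∈ p.tree)
    (hA : IsFrontAt p η A) {m w : List ℕ → ℝ} (hm : IsMuAt p η A (fun _ => 1) m)
    (hw : IsSemiMeasure p w) : m η ∈ Set.Icc (0 : ℝ) 1 ∧ w η ≤ m η := by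
  suffices InCone p η A η ∧ m η ∈ Set.Icc (0 : ℝ) 1 ∧ w η ≤ m η from this.2
  refine hA.induction hη (P := fun ρ => InCone p η A ρ ∧ m ρ ∈ Set.Icc (0 : ℝ) 1 ∧ w ρ ≤ m ρ)
    (fun ρ hρ => ?_) fun ρ hρ hηρ hρA ih => ?_
  · obtain ⟨hρt, hηρ⟩ := hA.1 ρ hρ
    rw [hm.1 ρ hρ]
    exact ⟨⟨hρt, hηρ, ρ, hρ, List.prefix_refl ρ⟩, ⟨zero_le_one, le_rfl⟩, (hw.1 ρ hρt).2⟩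
  · obtain ⟨ν, hν⟩ := (p.c ρ).pos_ne
    obtain ⟨-, -, σ, hσ, hνσ⟩ := (ih ν hν).1
    have hcone : InCone p η A ρ := ⟨hρ, hηρ, σ, hσ, ((p.succ_eq ρ hρ ν).2 hν).2.1.trans hνσ⟩
    have hrec := hm.2.1 ρ hcone hρA
    have hmI : ∀ ν ∈ (p.c ρ).pos, m ν ∈ Set.Icc (0 : ℝ) 1 := fun ν hν => (ih ν hν).2.1
    refine ⟨hcone, hrec ▸ hG.F_mem _ _ hmI, ?_⟩
    calc w ρ ≤ T.F (p.c ρ) w := hw.2 ρ hρ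
      _ ≤ T.F (p.c ρ) m := hN.mono _ (p.c_mem ρ hρ) w m
          (fun ν hν => hw.1 ν ((p.succ_eq ρ hρ ν).2 hν).1) hmI fun ν hν => (ih ν hν).2.2
      _ = m ρ := hrec.symm

theorem IsMuAt.mem_Icc (hG : T.Good) (hN : T.Nice) (hη : η ∈ p.tree) (hA : IsFrontAt p η A)
    {m : List ℕ → ℝ} (hm : IsMuAt p η A (fun _ => 1) m) : m η ∈ Set.Icc (0 : ℝ) 1 :=
  (hm.mem_Icc_and_le hG hN hη hA (isSemiMeasure_zero hG p)).1

theorem isMuAt_singleton (hη : η ∈ p.tree) (f : List ℕ → ℝ) :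
    IsMuAt p η {η} f (Set.indicator {η} f) := by
  refine ⟨fun ρ hρ => Set.indicator_of_mem hρ f, fun ρ ⟨_, hηρ, σ, hσ, hρσ⟩ hρη => ?_,
    fun ρ hρ => Set.indicator_of_notMem (fun hρη => hρ ?_) f⟩
  · rw [Set.mem_singleton_iff] at hσ
    subst hσ
    exact (hρη (hηρ.eq_of_length (le_antisymm hηρ.length_le hρσ.length_le)).symm).elim
  · rw [hρη]
    exact (isFrontAt_singleton hη).inCone_root hη

theorem IsMuAt.restrict (hG : T.Good) (hA : IsFrontAt p η A) {f m : List ℕ → ℝ}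
    (hm : IsMuAt p η A f m) (hην : η <+: ν) :
    IsMuAt p ν {ρ ∈ A | ν <+: ρ} f ({ρ | InCone p ν {ρ ∈ A | ν <+: ρ} ρ}.indicator m) := by
  set C := {ρ | InCone p ν {ρ ∈ A | ν <+: ρ} ρ}
  refine ⟨fun ρ hρ => ?_, fun ρ hρ hρA => ?_,
    fun ρ hρ => Set.indicator_of_notMem (s := C) hρ m⟩
  · rw [Set.indicator_of_mem (s := C) ⟨(hA.1 ρ hρ.1).1, hρ.2, ρ, hρ, List.prefix_refl ρ⟩]
    exact hm.1 ρ hρ.1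
  · rw [Set.indicator_of_mem (s := C) hρ]
    obtain ⟨hρt, hνρ, σ, hσ, hρσ⟩ := hρ
    rw [hm.2.1 ρ ⟨hρt, hην.trans hνρ, σ, hσ.1, hρσ⟩ fun h => hρA ⟨h, hνρ⟩]
    refine hG.F_congr _ _ _ fun τ hτ => ?_
    have hρτ := ((p.succ_eq ρ hρt τ).2 hτ).2.1
    by_cases hτν : τ ∈ C
    · rw [Set.indicator_of_mem hτν]
    · rw [Set.indicator_of_notMem hτν]
      refine hm.2.2 τ fun ⟨hτt, _, σ', hσ', hτσ'⟩ => hτν ?_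
      exact ⟨hτt, hνρ.trans hρτ, σ', ⟨hσ', (hνρ.trans hρτ).trans hτσ'⟩, hτσ'⟩

/-- `ρ.take (η.length + 1)` is the successor of `η` below `ρ`. -/
def glueMu (p : Cond T) (η : List ℕ) (m : List ℕ → List ℕ → ℝ) (ρ : List ℕ) : ℝ :=
  if ρ = η then T.F (p.c η) (fun ν => m ν ν)
  else if ρ.take (η.length + 1) ∈ (p.c η).pos then m (ρ.take (η.length + 1)) ρ else 0

theorem glueMu_self (m : List ℕ → List ℕ → ℝ) :
    glueMu p η m η = T.F (p.c η) (fun ν => m ν ν) :=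
  if_pos rfl

theorem glueMu_of_prefix (hη : η ∈ p.tree) (m : List ℕ → List ℕ → ℝ) {ρ : List ℕ}
    (hν : ν ∈ (p.c η).pos) (hνρ : ν <+: ρ) : glueMu p η m ρ = m ν ρ := by
  have hlen := ((p.succ_eq η hη ν).2 hν).2.2
  have htake : ρ.take (η.length + 1) = ν := by
    rw [← hlen]
    exact (List.prefix_iff_eq_take.mp hνρ).symm
  have hρη : ρ ≠ η := by
    rintro rfl
    have := hνρ.length_le
    omega
  rw [glueMu, if_neg hρη, htake, if_pos hν]

theorem IsMuAt.glue (hG : T.Good) (hη : η ∈ p.tree) {A : List ℕ → Set (List ℕ)}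
    {f : List ℕ → ℝ} {m : List ℕ → List ℕ → ℝ} (hA : ∀ ν ∈ (p.c η).pos, IsFrontAt p ν (A ν))
    (hm : ∀ ν ∈ (p.c η).pos, IsMuAt p ν (A ν) f (m ν)) :
    IsMuAt p η (⋃ ν ∈ (p.c η).pos, A ν) f (glueMu p η m) := by
  have hsucc : ∀ ν ∈ (p.c η).pos, ν ∈ p.tree ∧ η <+: ν ∧ ν.length = η.length + 1 :=
    fun ν hν => (p.succ_eq η hη ν).2 hν
  simp only [IsMuAt, Set.mem_iUnion]
  refine ⟨?_, fun ρ hρ hρA => ?_, fun ρ hρ => ?_⟩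
  · rintro ρ ⟨ν, hν, hρ⟩
    rw [glueMu_of_prefix hη m hν ((hA ν hν).1 ρ hρ).2]
    exact (hm ν hν).1 ρ hρ
  · obtain ⟨hρt, hηρ, σ, hσA, hρσ⟩ := hρ
    obtain ⟨ν, hν, hσ⟩ := Set.mem_iUnion₂.mp hσA
    by_cases hρη : ρ = η
    · subst hρη
      rw [glueMu_self]
      exact hG.F_congr _ _ _ fun ν hν => (glueMu_of_prefix hη m hν (List.prefix_refl ν)).symm
    have hνρ : ν <+: ρ := List.prefix_of_prefix_length_le ((hA ν hν).1 σ hσ).2 hρσ <| by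
      rw [(hsucc ν hν).2.2]
      exact Nat.lt_of_le_of_ne hηρ.length_le fun h => hρη (hηρ.eq_of_length h).symm
    rw [glueMu_of_prefix hη m hν hνρ,
      (hm ν hν).2.1 ρ ⟨hρt, hνρ, σ, hσ, hρσ⟩ fun h => hρA ⟨ν, hν, h⟩]
    exact hG.F_congr _ _ _ fun τ hτ =>
      (glueMu_of_prefix hη m hν (hνρ.trans ((p.succ_eq ρ hρt τ).2 hτ).2.1)).symm
  · have hρη : ρ ≠ η := by
      rintro rfl
      exact hρ ((IsFrontAt.biUnion hη hA).inCone_root hη)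
    rw [glueMu, if_neg hρη]
    split_ifs with hν
    · refine (hm _ hν).2.2 ρ fun ⟨hρt, hνρ, σ, hσ, hρσ⟩ => hρ ?_
      exact ⟨hρt, (hsucc _ hν).2.1.trans hνρ, σ, Set.mem_biUnion hν hσ, hρσ⟩
    · rfl

theorem muAt_le (hG : T.Good) (hN : T.Nice) (hη : η ∈ p.tree) (hA : IsFrontAt p η A)
    {m : List ℕ → ℝ} (hm : IsMuAt p η A (fun _ => 1) m) : muAt p η ≤ m η :=
  csInf_le ⟨0, fun _ ⟨_, _, hA', hm', hx⟩ => hx ▸ (hm'.mem_Icc hG hN hη hA').1⟩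
    ⟨A, m, hA, hm, rfl⟩

theorem exists_isMuAt (hG : T.Good) (hη : η ∈ p.tree) :
    ∃ A m, IsFrontAt p η A ∧ IsMuAt p η A (fun _ => 1) m := by
  have hpos : ∀ ν ∈ (p.c η).pos, ν ∈ p.tree := fun ν hν => ((p.succ_eq η hη ν).2 hν).1
  exact ⟨_, _, IsFrontAt.biUnion hη fun ν hν => isFrontAt_singleton (hpos ν hν),
    IsMuAt.glue (A := fun ν => {ν}) (m := fun ν => Set.indicator {ν} fun _ => 1) hG hη
      (fun ν hν => isFrontAt_singleton (hpos ν hν)) fun ν hν => isMuAt_singleton (hpos ν hν) _⟩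

theorem le_muAt (hG : T.Good) (hη : η ∈ p.tree) {a : ℝ}
    (h : ∀ A m, IsFrontAt p η A → IsMuAt p η A (fun _ => 1) m → a ≤ m η) : a ≤ muAt p η := by
  obtain ⟨A, m, hA, hm⟩ := exists_isMuAt hG hη
  refine le_csInf ⟨m η, A, m, hA, hm, rfl⟩ ?_
  rintro _ ⟨A, m, hA, hm, rfl⟩
  exact h A m hA hm

theorem exists_isMuAt_lt (hG : T.Good) (hη : η ∈ p.tree) {r : ℝ} (h : muAt p η < r) :
    ∃ A m, IsFrontAt p η A ∧ IsMuAt p η A (fun _ => 1) m ∧ m η < r := by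
  obtain ⟨A, m, hA, hm⟩ := exists_isMuAt hG hη
  obtain ⟨_, ⟨A, m, hA, hm, rfl⟩, hlt⟩ :=
    exists_lt_of_csInf_lt (by exact ⟨m η, A, m, hA, hm, rfl⟩) h
  exact ⟨A, m, hA, hm, hlt⟩

theorem IsSemiMeasure.le_muAt (hG : T.Good) (hN : T.Nice) {w : List ℕ → ℝ}
    (hw : IsSemiMeasure p w) (hη : η ∈ p.tree) : w η ≤ muAt p η :=
  MeasuredTrees.le_muAt hG hη fun _ _ hA hm => (hm.mem_Icc_and_le hG hN hη hA hw).2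

theorem muAt_mem_Icc (hG : T.Good) (hN : T.Nice) (hη : η ∈ p.tree) :
    muAt p η ∈ Set.Icc (0 : ℝ) 1 := by
  obtain ⟨A, m, hA, hm⟩ := exists_isMuAt hG hη
  exact ⟨(isSemiMeasure_zero hG p).le_muAt hG hN hη,
    (muAt_le hG hN hη hA hm).trans (hm.mem_Icc hG hN hη hA).2⟩

theorem F_muAt_le_muAt (hG : T.Good) (hN : T.Nice) (hη : η ∈ p.tree) :
    T.F (p.c η) (fun ν => muAt p ν) ≤ muAt p η := by
  have hI : ∀ ν ∈ (p.c η).pos, muAt p ν ∈ Set.Icc (0 : ℝ) 1 :=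
    fun ν hν => muAt_mem_Icc hG hN ((p.succ_eq η hη ν).2 hν).1
  refine le_muAt hG hη fun A m hA hm => ?_
  by_cases hηA : η ∈ A
  · rw [hm.1 η hηA]
    exact (hG.F_mem _ _ hI).2
  have hsucc : ∀ ν ∈ (p.c η).pos, muAt p ν ≤ m ν ∧ m ν ∈ Set.Icc (0 : ℝ) 1 := by
    intro ν hν
    obtain ⟨hνt, hην, hlen⟩ := (p.succ_eq η hη ν).2 hν
    have hAν := hA.restrict hη hην fun σ hσ hσν =>
      (List.IsPrefix.eq_or_eq_of_length_succ (hA.1 σ hσ).2 hσν hlen).resolve_left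
        fun h => hηA (h ▸ hσ)
    have hmν := hm.restrict hG hA hην
    rw [← Set.indicator_of_mem (show ν ∈ {ρ | InCone p ν _ ρ} from hAν.inCone_root hνt) m]
    exact ⟨muAt_le hG hN hνt hAν hmν, hmν.mem_Icc hG hN hνt hAν⟩
  calc T.F (p.c η) (fun ν => muAt p ν) ≤ T.F (p.c η) m :=
        hN.mono _ (p.c_mem η hη) _ _ hI (fun ν hν => (hsucc ν hν).2) fun ν hν => (hsucc ν hν).1
    _ = m η := (hm.2.1 η (hA.inCone_root hη) hηA).symm

theorem muAt_le_F_muAt (hG : T.Good) (hN : T.Nice) (hη : η ∈ p.tree) :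
    muAt p η ≤ T.F (p.c η) (fun ν => muAt p ν) := by
  have hsucc : ∀ ν ∈ (p.c η).pos, ν ∈ p.tree := fun ν hν => ((p.succ_eq η hη ν).2 hν).1
  refine le_of_forall_pos_le_add fun ε hε => ?_
  obtain ⟨r, hr, hFr⟩ :=
    hN.approx _ (p.c_mem η hη) _ (fun ν hν => muAt_mem_Icc hG hN (hsucc ν hν)) ε hε
  choose! A m hA hm hmr using fun ν hν => exists_isMuAt_lt hG (hsucc ν hν) (hr ν hν)
  calc muAt p η ≤ glueMu p η m η :=
        muAt_le hG hN hη (IsFrontAt.biUnion hη hA) (IsMuAt.glue hG hη hA hm)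
    _ = T.F (p.c η) (fun ν => m ν ν) := glueMu_self m
    _ ≤ T.F (p.c η) (fun ν => muAt p ν) + ε :=
        (hFr _ (fun ν hν => (hm ν hν).mem_Icc hG hN (hsucc ν hν) (hA ν hν)) fun ν hν =>
          ⟨muAt_le hG hN (hsucc ν hν) (hA ν hν) (hm ν hν), hmr ν hν⟩).le

/-- Proposition `usesemi`: (1) every semi-`F`-measure is dominated by
`μ^F_p`; (2) a semi-`F`-measure positive at the root witnesses `p ∈ Q^mt_∅`;
(3) if `p ∈ Q^mt_∅` then `η ↦ μ^F_p(η)` is an `F`-measure on `p`. -/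
theorem semi_measure_properties
    (T : MTriple H) (hG : T.Good) (hN : T.Nice) (p : Cond T) :
    (∀ m : List ℕ → ℝ, IsSemiMeasure p m → ∀ η ∈ p.tree, m η ≤ muAt p η) ∧
    ((∃ m : List ℕ → ℝ, IsSemiMeasure p m ∧ 0 < m p.root) → 0 < muF p) ∧
    (0 < muF p →
      (∀ η ∈ p.tree, muAt p η ∈ Set.Icc (0 : ℝ) 1) ∧
      ∀ η ∈ p.tree, muAt p η = T.F (p.c η) (fun ν => muAt p ν)) := by
  refine ⟨fun m hm η hη => hm.le_muAt hG hN hη, fun ⟨m, hm, hpos⟩ =>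
    hpos.trans_le (hm.le_muAt hG hN p.root_mem), fun _ => ⟨fun η hη => muAt_mem_Icc hG hN hη,
      fun η hη => (muAt_le_F_muAt hG hN hη).antisymm (F_muAt_le_muAt hG hN hη)⟩⟩

end MeasuredTrees
end
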